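/- arXiv:math/0503749 — 6 statements merged into one kernel-verified Lean document; each statement's English description precedes it below -/
import Mathlib

section
/- Let R be a p × n matrix of natural numbers and let π : ℂⁿ → ℂᵖ be the monomial map defined by π(x)_i = ∏_{j=1}^n x_j^{R_{i,j}}. Then for every x ∈ ℂⁿ with x_j ≠ 0 for all j, π is complex-differentiable at x and the rank of its derivative at x (the complex dimension of the range of the ℂ-linear map fderiv ℂ π x) equals the rank of R regarded as a matrix with complex entries. In particular π has constant rank on the complement of the coordinate hyperplanes. -/
/-! Where no coordinate vanishes, the logarithmic derivative of `x ↦ ∏ⱼ xⱼ ^ eⱼ` is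
`∑ⱼ eⱼ dxⱼ / xⱼ`. Hence the Jacobian of the monomial map with exponent matrix `R` is
`diag(π x) · R · diag(x⁻¹)`, and both diagonal factors are invertible. -/

open Matrix ContinuousLinearMap

namespace Matrix

variable {K m n : Type*} [Field K] [Fintype m] [Fintype n] [DecidableEq m] [DecidableEq n]

theorem isUnit_det_diagonal {w : m → K} (hw : ∀ i, w i ≠ 0) : IsUnit (diagonal w).det :=
  (isUnit_iff_isUnit_det _).mp (isUnit_diagonal.mpr (Pi.isUnit_iff.mpr fun i => (hw i).isUnit))

theorem rank_diagonal_mul_mul_diagonal (A : Matrix m n K) {d : m → K} {d' : n → K}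
    (hd : ∀ i, d i ≠ 0) (hd' : ∀ j, d' j ≠ 0) :
    (diagonal d * A * diagonal d').rank = A.rank := by
  rw [rank_mul_eq_left_of_isUnit_det _ _ (isUnit_det_diagonal hd'),
    rank_mul_eq_right_of_isUnit_det _ _ (isUnit_det_diagonal hd)]

end Matrix

section MonomialMap

variable {𝕜 ι κ : Type*} [NontriviallyNormedField 𝕜] [Fintype ι]

theorem hasFDerivAt_apply_pow (x : ι → 𝕜) {j : ι} (hx : x j ≠ 0) (k : ℕ) :
    HasFDerivAt (fun y : ι → 𝕜 => y j ^ k)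
      ((k * x j ^ k / x j) • (proj j : (ι → 𝕜) →L[𝕜] 𝕜)) x := by
  have hpow : (k : 𝕜) * x j ^ (k - 1) = k * x j ^ k / x j := by
    rcases k with _ | k
    · simp
    · rw [pow_succ, Nat.add_sub_cancel, mul_div_assoc, mul_div_cancel_right₀ _ hx]
  rw [← hpow]
  exact (hasDerivAt_pow k (x j)).comp_hasFDerivAt x (hasFDerivAt_apply j x)

variable [DecidableEq ι]

theorem hasFDerivAt_prod_pow (e : ι → ℕ) {x : ι → 𝕜} (hx : ∀ j, x j ≠ 0) :
    HasFDerivAt (fun y : ι → 𝕜 => ∏ j, y j ^ e j)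
      ((∏ j, x j ^ e j) • ∑ j, ((e j : 𝕜) / x j) • (proj j : (ι → 𝕜) →L[𝕜] 𝕜)) x := by
  refine (HasFDerivAt.finsetProd fun j _ => hasFDerivAt_apply_pow x (hx j) (e j)).congr_fderiv ?_
  rw [Finset.smul_sum]
  refine Finset.sum_congr rfl fun j _ => ?_
  rw [smul_smul, smul_smul, ← Finset.prod_erase_mul _ _ (Finset.mem_univ j)]
  congr 1
  ring

variable [Fintype κ] [DecidableEq κ]

/-- The Jacobian of `y ↦ (∏ⱼ yⱼ ^ Rᵢⱼ)ᵢ` at `x`, but only off the coordinate hyperplanes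
(`0⁻¹ = 0`). -/
def monomialJacobian (R : Matrix κ ι ℕ) (x : ι → 𝕜) : Matrix κ ι 𝕜 :=
  diagonal (fun i => ∏ j, x j ^ R i j) * R.map (fun a => (a : 𝕜)) * diagonal (fun j => (x j)⁻¹)

theorem rank_monomialJacobian (R : Matrix κ ι ℕ) {x : ι → 𝕜} (hx : ∀ j, x j ≠ 0) :
    (monomialJacobian R x).rank = (R.map fun a => (a : 𝕜)).rank :=
  rank_diagonal_mul_mul_diagonal _
    (fun _ => Finset.prod_ne_zero_iff.mpr fun j _ => pow_ne_zero _ (hx j))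
    (fun j => inv_ne_zero (hx j))

theorem hasFDerivAt_monomial [CompleteSpace 𝕜] (R : Matrix κ ι ℕ) {x : ι → 𝕜}
    (hx : ∀ j, x j ≠ 0) :
    HasFDerivAt (fun y i => ∏ j, y j ^ R i j)
      (monomialJacobian R x).mulVecLin.toContinuousLinearMap x := by
  refine hasFDerivAt_pi'.mpr fun i => (hasFDerivAt_prod_pow (R i) hx).congr_fderiv ?_
  ext v
  simp [monomialJacobian, mulVec, dotProduct, Finset.mul_sum, div_eq_mul_inv, mul_assoc]

end MonomialMap

/-- The monomial map `π(x)_i = ∏_j x_j^{R_{i,j}}` is complex differentiable at any point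
with all coordinates nonzero, and the rank of its derivative there equals the rank of the
exponent matrix `R` (viewed as a complex matrix). -/
theorem stmt_2 (p n : ℕ) (R : Matrix (Fin p) (Fin n) ℕ)
    (π : (Fin n → ℂ) → (Fin p → ℂ)) (hπ : ∀ x i, π x i = ∏ j, x j ^ R i j)
    (x : Fin n → ℂ) (hx : ∀ j, x j ≠ 0) :
    DifferentiableAt ℂ π x ∧
      Module.finrank ℂ (LinearMap.range (fderiv ℂ π x : (Fin n → ℂ) →ₗ[ℂ] (Fin p → ℂ))) =
        (R.map fun a => (a : ℂ)).rank := by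
  obtain rfl : π = fun y i => ∏ j, y j ^ R i j := funext fun y => funext (hπ y)
  have hderiv := hasFDerivAt_monomial R hx
  refine ⟨hderiv.differentiableAt, ?_⟩
  rw [hderiv.fderiv, ← rank_monomialJacobian R hx]
  rfl
end

section
/- Let R : Fin p → (Fin n →₀ ℕ) be nonzero exponent multi-indices such that the monomials x^{R_1}, …, x^{R_p} are algebraically independent over ℂ (as elements of the polynomial ring ℂ[x_1,…,x_n]). Let f_1, …, f_l be formal power series in p variables over ℂ, and for each j let F_j be the formal power series in n variables obtained from f_j by substituting u_i ↦ x^{R_i} for each i (this substitution is well defined since each R_i ≠ 0). Then the family (F_1,…,F_l) is nondegenerate if and only if the family (f_1,…,f_l) is nondegenerate; that is: (for every nonzero c ∈ ℂˡ, Σ_{j=1}^l c_j F_j ≠ 0) if and only if (for every nonzero c ∈ ℂˡ, Σ_{j=1}^l c_j f_j ≠ 0). -/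
/-!
Substituting `u_i ↦ x^{R_i}` sends `u^D` to `x^{∑ D_i R_i}`. Algebraic independence of the
`x^{R_i}` makes `D ↦ ∑ D_i R_i` injective, so `F_j` is `f_j` with its coefficients moved along an
injection, i.e. the image of `f_j` under one injective linear map, and injective linear maps
preserve the vanishing and non-vanishing of linear combinations.
-/

open MvPolynomial Function

theorem MvPolynomial.aeval_monomial_one_monomial_one {K σ ι : Type*} [CommSemiring K] [Fintype ι]
    (R : ι → σ →₀ ℕ) (D : ι →₀ ℕ) :
    aeval (fun i => (monomial (R i) (1 : K) : MvPolynomial σ K)) (monomial D (1 : K)) =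
      monomial (∑ i, D i • R i) 1 := by
  rw [aeval_monomial, map_one, one_mul, Finsupp.prod_fintype _ _ (by simp), monomial_sum_one]
  simp only [monomial_pow, one_pow]

theorem AlgebraicIndependent.sum_smul_injective {K σ ι : Type*} [CommRing K]
    [Nontrivial K] [Fintype ι] {R : ι → σ →₀ ℕ}
    (h : AlgebraicIndependent K fun i => (monomial (R i) (1 : K) : MvPolynomial σ K)) :
    Injective fun D : ι →₀ ℕ => ∑ i, D i • R i := by
  intro D D' hDD'
  apply monomial_left_injective (one_ne_zero (α := K))
  apply h
  dsimp only
  rw [aeval_monomial_one_monomial_one, aeval_monomial_one_monomial_one]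
  exact congrArg (monomial · 1) hDD'

namespace MvPowerSeries

variable {S σ ι : Type*} [Semiring S]

noncomputable def extendByZero (φ : (ι →₀ ℕ) → σ →₀ ℕ) :
    MvPowerSeries ι S →ₗ[S] MvPowerSeries σ S :=
  ExtendByZero.linearMap S φ

theorem coeff_extendByZero (φ : (ι →₀ ℕ) → σ →₀ ℕ) (g : MvPowerSeries ι S) (E : σ →₀ ℕ) :
    coeff E (extendByZero φ g) = extend φ (fun D => coeff D g) (0 : (σ →₀ ℕ) → S) E :=
  rfl

theorem extendByZero_injective {φ : (ι →₀ ℕ) → σ →₀ ℕ} (hφ : Injective φ) :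
    Injective (extendByZero (S := S) φ) :=
  extend_injective hφ (0 : (σ →₀ ℕ) → S)

theorem eq_extendByZero_of_coeff_eq_finsum {φ : (ι →₀ ℕ) → σ →₀ ℕ} (hφ : Injective φ)
    {g : MvPowerSeries ι S} {G : MvPowerSeries σ S}
    (hG : ∀ E, coeff E G = ∑ᶠ (D) (_ : φ D = E), coeff D g) :
    G = extendByZero φ g := by
  ext E
  rw [hG, coeff_extendByZero]
  by_cases hE : ∃ D, φ D = E
  · obtain ⟨D, rfl⟩ := hE
    simp_rw [hφ.extend_apply, hφ.eq_iff]
    exact finsum_cond_eq_left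
  · rw [extend_apply' _ _ _ hE]
    simp only [not_exists.mp hE, finsum_false, finsum_zero, Pi.zero_apply]

end MvPowerSeries

theorem stmt_3_general (n p l : ℕ) (R : Fin p → (Fin n →₀ ℕ))
    (halg : AlgebraicIndependent ℂ fun i : Fin p =>
      (MvPolynomial.monomial (R i) (1 : ℂ) : MvPolynomial (Fin n) ℂ))
    (f : Fin l → MvPowerSeries (Fin p) ℂ)
    (F : Fin l → MvPowerSeries (Fin n) ℂ)
    (hF : ∀ j, ∀ E : Fin n →₀ ℕ, MvPowerSeries.coeff E (F j) =
      ∑ᶠ (D : Fin p →₀ ℕ) (_ : ∑ i, D i • R i = E), MvPowerSeries.coeff D (f j)) :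
    (∀ c : Fin l → ℂ, c ≠ 0 → ∑ j, c j • F j ≠ 0) ↔
      (∀ c : Fin l → ℂ, c ≠ 0 → ∑ j, c j • f j ≠ 0) := by
  have hinj := halg.sum_smul_injective
  set L := MvPowerSeries.extendByZero (S := ℂ) fun D : Fin p →₀ ℕ => ∑ i, D i • R i
  have hFL : ∀ j, F j = L (f j) := fun j =>
    MvPowerSeries.eq_extendByZero_of_coeff_eq_finsum hinj (hF j)
  have hcomb : ∀ c : Fin l → ℂ, ∑ j, c j • F j = L (∑ j, c j • f j) := by
    simp only [hFL, map_sum, map_smul, implies_true]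
  simp only [hcomb, ne_eq, map_eq_zero_iff L (MvPowerSeries.extendByZero_injective hinj)]

/-- Substituting algebraically independent monomials `x^{R_i}` (with `R_i ≠ 0`) into a
family of formal power series preserves nondegeneracy in the sense of Rüssmann.
Here `F j` is characterized by its coefficients: the coefficient of `x^E` in `F j` is the
(finite) sum of the coefficients of `u^D` in `f j` over all `D` with `∑ i, D i • R i = E`. -/
theorem stmt_3 (n p l : ℕ) (R : Fin p → (Fin n →₀ ℕ)) (hR : ∀ i, R i ≠ 0)
    (halg : AlgebraicIndependent ℂ fun i : Fin p =>
      (MvPolynomial.monomial (R i) (1 : ℂ) : MvPolynomial (Fin n) ℂ))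
    (f : Fin l → MvPowerSeries (Fin p) ℂ)
    (F : Fin l → MvPowerSeries (Fin n) ℂ)
    (hF : ∀ j, ∀ E : Fin n →₀ ℕ, MvPowerSeries.coeff E (F j) =
      ∑ᶠ (D : Fin p →₀ ℕ) (_ : ∑ i, D i • R i = E), MvPowerSeries.coeff D (f j)) :
    (∀ c : Fin l → ℂ, c ≠ 0 → ∑ j, c j • F j ≠ 0) ↔
      (∀ c : Fin l → ℂ, c ≠ 0 → ∑ j, c j • f j ≠ 0) :=
  stmt_3_general n p l R halg f F hF
end

section
/- Let ω : ℕ → ℝ be a diophantine sequence, let γ, c₁, Λ be positive reals with γ ≤ 1 and γ² ω_{k+1}² ≤ c₁ for all k, let l ≥ 1 be an integer, let q ∈ ℕ, and let r be a real number with 1/2 < r ≤ 1. Then there exists k₀ ∈ ℕ such that for all k ≥ k₀, writing m = 2^k and θ_k := (γ² ω_{k+1}² / c₁)^{1/m} · m^{−2/m}, one has θ_k^q · r · (1 − θ_k) > γ ω_{k+1} / (24 l Λ (2m+1)). In other words, the gap r_q − r_{q+1} between the radii r_q := θ_k^q r and r_{q+1} := θ_k^{q+1} r eventually exceeds ε :=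 γ ω_{k+1} / (24 l Λ (2m+1)). -/
open Filter Real Topology

/-!
Write `m = 2^k` and `a_k = γ²ω_{k+1}²/c₁ ∈ (0, 1]`. Then `θ_k = exp (-x_k)` with
`x_k = (2 log m - log a_k)/m`. The diophantine condition makes `log ω_{k+1} / 2^k → 0`, so
`x_k → 0` and `θ_k^q r → r > 1/2`; on the other hand `a_k ≤ 1` gives `x_k ≥ 2 k log 2 / m`, so
`1 - θ_k ≥ x_k/2 ≥ k log 2 / m`. The gap is thus eventually at least `k log 2 / (2m)`, while
`ε ≤ 1/(48 Λ m)`.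
-/

lemma rpow_one_div_mul_rpow_neg_two_div {a m : ℝ} (ha : 0 < a) (hm : 0 < m) :
    a ^ (1 / m) * m ^ (-2 / m) = exp (-((2 * log m - log a) / m)) := by
  rw [rpow_def_of_pos ha, rpow_def_of_pos hm, ← exp_add]
  ring_nf

lemma div_two_le_one_sub_exp_neg {x : ℝ} (hx0 : 0 ≤ x) (hx1 : x ≤ 1) :
    x / 2 ≤ 1 - exp (-x) := by
  have hexp : x + 1 ≤ exp x := add_one_le_exp x
  have hinv : exp (-x) * exp x = 1 := by rw [← exp_add, neg_add_cancel, exp_zero]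
  nlinarith [mul_le_mul_of_nonneg_left hexp (exp_pos (-x)).le]

lemma eventually_half_lt_exp_neg_pow_mul {ι : Type*} {l : Filter ι} {x : ι → ℝ}
    (hx : Tendsto x l (𝓝 0)) (q : ℕ) {r : ℝ} (hr : 1 / 2 < r) :
    ∀ᶠ i in l, 1 / 2 < exp (-x i) ^ q * r := by
  have hcont : Continuous fun t : ℝ => exp (-t) ^ q * r := by fun_prop
  have hlim := (hcont.tendsto 0).comp hx
  simp only [neg_zero, exp_zero, one_pow, one_mul] at hlim
  exact hlim.eventually_const_lt hr

lemma tendsto_two_mul_log_two_pow_sub_log_div_two_pow {a : ℕ → ℝ}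
    (ha : Tendsto (fun k => log (a k) / 2 ^ k) atTop (𝓝 0)) :
    Tendsto (fun k : ℕ => (2 * log ((2 : ℝ) ^ k) - log (a k)) / 2 ^ k) atTop (𝓝 0) := by
  have hk : Tendsto (fun k : ℕ => (k : ℝ) * (1 / 2) ^ k) atTop (𝓝 0) :=
    tendsto_self_mul_const_pow_of_lt_one (by norm_num) (by norm_num)
  have hlim := (hk.const_mul (2 * log 2)).sub ha
  rw [mul_zero, sub_zero] at hlim
  refine hlim.congr fun k => ?_
  rw [log_pow, one_div_pow, sub_div]
  field_simp

lemma eventually_div_two_pow_lt_gap {a : ℕ → ℝ} (ha0 : ∀ k, 0 < a k) (ha1 : ∀ k, a k ≤ 1)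
    (ha : Tendsto (fun k => log (a k) / 2 ^ k) atTop (𝓝 0)) (q : ℕ) {r : ℝ} (hr : 1 / 2 < r)
    (C : ℝ) :
    ∀ᶠ k in atTop, C / 2 ^ k <
      (a k ^ ((1 : ℝ) / 2 ^ k) * ((2 : ℝ) ^ k) ^ (-(2 : ℝ) / 2 ^ k)) ^ q * r *
        (1 - a k ^ ((1 : ℝ) / 2 ^ k) * ((2 : ℝ) ^ k) ^ (-(2 : ℝ) / 2 ^ k)) := by
  set x : ℕ → ℝ := fun k => (2 * log ((2 : ℝ) ^ k) - log (a k)) / 2 ^ k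
  have hx : Tendsto x atTop (𝓝 0) := tendsto_two_mul_log_two_pow_sub_log_div_two_pow ha
  have hk : Tendsto (fun k : ℕ => (k : ℝ) * log 2) atTop atTop :=
    tendsto_natCast_atTop_atTop.atTop_mul_const (log_pos one_lt_two)
  filter_upwards [hx.eventually_le_const one_pos, eventually_half_lt_exp_neg_pow_mul hx q hr,
    hk.eventually_gt_atTop (2 * C)] with k hx1 hhalf hC
  have hm : (0 : ℝ) < 2 ^ k := by positivity
  rw [rpow_one_div_mul_rpow_neg_two_div (ha0 k) hm]
  have hx_ge : 2 * ((k : ℝ) * log 2) / 2 ^ k ≤ x k := by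
    have := log_nonpos (ha0 k).le (ha1 k)
    simp only [x, log_pow]
    gcongr
    linarith
  have hx0 : 0 ≤ x k := le_trans (by positivity) hx_ge
  calc C / 2 ^ k < (k : ℝ) * log 2 / 2 / 2 ^ k := by gcongr; linarith
    _ = 1 / 2 * (2 * ((k : ℝ) * log 2) / 2 ^ k / 2) := by ring
    _ ≤ 1 / 2 * (x k / 2) := by gcongr
    _ ≤ exp (-x k) ^ q * r * (x k / 2) := by gcongr
    _ ≤ exp (-x k) ^ q * r * (1 - exp (-x k)) :=
        mul_le_mul_of_nonneg_left (div_two_le_one_sub_exp_neg hx0 hx1) (by linarith)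

lemma tendsto_log_mul_sq_div_two_pow {ω : ℕ → ℝ} (hω : ∀ k, 0 < ω (k + 1))
    (hsum : Summable fun k : ℕ => -log (ω (k + 1)) / 2 ^ (k + 1)) {b : ℝ} (hb : b ≠ 0) :
    Tendsto (fun k : ℕ => log (b * ω (k + 1) ^ 2) / 2 ^ k) atTop (𝓝 0) := by
  have hpow : Tendsto (fun k : ℕ => ((1 : ℝ) / 2) ^ k) atTop (𝓝 0) :=
    tendsto_pow_atTop_nhds_zero_of_lt_one (by norm_num) (by norm_num)
  have hlim := (hpow.const_mul (log b)).sub (hsum.tendsto_atTop_zero.const_mul 4)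
  rw [mul_zero, mul_zero, sub_zero] at hlim
  refine hlim.congr fun k => ?_
  rw [log_mul hb (pow_ne_zero 2 (hω k).ne'), log_pow, one_div_pow, pow_succ]
  field_simp
  ring

lemma div_lt_one_div_of_le_one {t Λ m : ℝ} (ht1 : t ≤ 1) {l : ℕ} (hl : 1 ≤ l)
    (hΛ : 0 < Λ) (hm : 0 < m) :
    t / (24 * (l : ℝ) * Λ * (2 * m + 1)) < 1 / (48 * Λ) / m := by
  have hl' : (1 : ℝ) ≤ l := by exact_mod_cast hl
  have hden : 48 * Λ * m < 24 * (l : ℝ) * Λ * (2 * m + 1) := by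
    nlinarith [mul_le_mul_of_nonneg_right hl' (by positivity : (0 : ℝ) ≤ Λ * (2 * m + 1))]
  calc t / (24 * (l : ℝ) * Λ * (2 * m + 1)) ≤ 1 / (24 * (l : ℝ) * Λ * (2 * m + 1)) := by gcongr
    _ < 1 / (48 * Λ * m) := div_lt_div_of_pos_left one_pos (by positivity) hden
    _ = 1 / (48 * Λ) / m := by rw [div_div]

theorem stmt_8_general (ω : ℕ → ℝ) (hω : ∀ k, 1 ≤ k → 0 < ω k)
    (hω1 : ∀ k, 1 ≤ k → ω k ≤ 1)
    (hsum : Summable fun k : ℕ => -Real.log (ω (k + 1)) / 2 ^ (k + 1))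
    (γ c₁ Λ : ℝ) (hγ : 0 < γ) (hγ1 : γ ≤ 1) (hc₁ : 0 < c₁) (hΛ : 0 < Λ)
    (hbd : ∀ k : ℕ, γ ^ 2 * ω (k + 1) ^ 2 ≤ c₁)
    (l : ℕ) (hl : 1 ≤ l) (q : ℕ) (r : ℝ) (hr : 1 / 2 < r) :
    ∃ k₀ : ℕ, ∀ k, k₀ ≤ k →
      γ * ω (k + 1) / (24 * (l : ℝ) * Λ * (2 * 2 ^ k + 1)) <
        ((γ ^ 2 * ω (k + 1) ^ 2 / c₁) ^ ((1 : ℝ) / 2 ^ k) *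
            ((2 : ℝ) ^ k) ^ (-(2 : ℝ) / 2 ^ k)) ^ q * r *
          (1 - (γ ^ 2 * ω (k + 1) ^ 2 / c₁) ^ ((1 : ℝ) / 2 ^ k) *
            ((2 : ℝ) ^ k) ^ (-(2 : ℝ) / 2 ^ k)) := by
  have hω' : ∀ k, 0 < ω (k + 1) := fun k => hω (k + 1) (Nat.le_add_left 1 k)
  have ha0 : ∀ k, 0 < γ ^ 2 * ω (k + 1) ^ 2 / c₁ := fun k => by have := hω' k; positivity
  have ha1 : ∀ k, γ ^ 2 * ω (k + 1) ^ 2 / c₁ ≤ 1 := fun k => div_le_one_of_le₀ (hbd k) hc₁.le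
  have ha : Tendsto (fun k => log (γ ^ 2 * ω (k + 1) ^ 2 / c₁) / 2 ^ k) atTop (𝓝 0) := by
    refine (tendsto_log_mul_sq_div_two_pow hω' hsum (b := γ ^ 2 / c₁) (by positivity)).congr
      fun k => ?_
    rw [div_mul_eq_mul_div]
  obtain ⟨k₀, hk₀⟩ :=
    eventually_atTop.1 (eventually_div_two_pow_lt_gap ha0 ha1 ha q hr (1 / (48 * Λ)))
  refine ⟨k₀, fun k hk => lt_trans ?_ (hk₀ k hk)⟩
  have hγω : γ * ω (k + 1) ≤ 1 := mul_le_one₀ hγ1 (hω' k).le (hω1 _ (Nat.le_add_left 1 k))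
  exact div_lt_one_div_of_le_one hγω hl hΛ (by positivity)

/-- Eventually the gap `r_q − r_{q+1} = θ_k^q·r·(1−θ_k)` between consecutive shrunken
radii exceeds `ε = γω_{k+1}/(24lΛ(2m+1))`, where `m = 2^k` and
`θ_k = (γ²ω_{k+1}²/c₁)^{1/m}·m^{−2/m}`. -/
theorem stmt_8 (ω : ℕ → ℝ) (hω : ∀ k, 1 ≤ k → 0 < ω k)
    (hω1 : ∀ k, 1 ≤ k → ω k ≤ 1) (hmono : ∀ k, 1 ≤ k → ω (k + 1) ≤ ω k)
    (hsum : Summable fun k : ℕ => -Real.log (ω (k + 1)) / 2 ^ (k + 1))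
    (γ c₁ Λ : ℝ) (hγ : 0 < γ) (hγ1 : γ ≤ 1) (hc₁ : 0 < c₁) (hΛ : 0 < Λ)
    (hbd : ∀ k : ℕ, γ ^ 2 * ω (k + 1) ^ 2 ≤ c₁)
    (l : ℕ) (hl : 1 ≤ l) (q : ℕ) (r : ℝ) (hr : 1 / 2 < r) (hr1 : r ≤ 1) :
    ∃ k₀ : ℕ, ∀ k, k₀ ≤ k →
      γ * ω (k + 1) / (24 * (l : ℝ) * Λ * (2 * 2 ^ k + 1)) <
        ((γ ^ 2 * ω (k + 1) ^ 2 / c₁) ^ ((1 : ℝ) / 2 ^ k) *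
            ((2 : ℝ) ^ k) ^ (-(2 : ℝ) / 2 ^ k)) ^ q * r *
          (1 - (γ ^ 2 * ω (k + 1) ^ 2 / c₁) ^ ((1 : ℝ) / 2 ^ k) *
            ((2 : ℝ) ^ k) ^ (-(2 : ℝ) / 2 ^ k)) :=
  stmt_8_general ω hω hω1 hsum γ c₁ Λ hγ hγ1 hc₁ hΛ hbd l hl q r hr
end

section
/- Let n ≥ 1 and m be integers with m ≥ n, let θ be a real number with 0 < θ < 1, and assume that (2q)^{n+1} · θ^q ≤ n! for every integer q ≥ m+1. Then for every index i ∈ {1,…,n} the sum over all multi-indices Q ∈ ℕⁿ with |Q| ≥ m+1 of Q_i · θ^{2|Q|} converges and satisfies Σ_{Q ∈ ℕⁿ, |Q| ≥ m+1} Q_i · θ^{2|Q|} ≤ θ^{m+1} / (1 − θ). -/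
/-!
Group the multi-indices by their length `c = |Q| ≥ m + 1`. There are `multichoose n c` of
them, and `n! · multichoose n c ≤ (c + n)^n ≤ (2c)^n` since `n ≤ c`; each has `Q_i ≤ c`, so
level `c` contributes at most `c · (2c)^n / n! · θ^{2c} ≤ θ^c` by the hypothesis. Since the
terms are nonnegative, bounding every finite partial sum by the geometric series
`∑_{c ≥ m+1} θ^c = θ^{m+1} / (1 - θ)` gives both summability and the estimate.
-/

open Finset Nat

theorem summable_and_tsum_le_of_sum_fiber_le {α β : Type*} {f : α → ℝ} (hf : 0 ≤ f)
    (g : α → β) {b : β → ℝ} (hb : Summable b)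
    (hfib : ∀ c (s : Finset α), (∀ x ∈ s, g x = c) → ∑ x ∈ s, f x ≤ b c) :
    Summable f ∧ ∑' x, f x ≤ ∑' c, b c := by
  classical
  have hb0 (c : β) : 0 ≤ b c := by simpa using hfib c ∅ (by simp)
  have hsum (s : Finset α) : ∑ x ∈ s, f x ≤ ∑' c, b c :=
    calc ∑ x ∈ s, f x = ∑ c ∈ s.image g, ∑ x ∈ s with g x = c, f x :=
          (sum_fiberwise_of_maps_to (fun x hx => mem_image_of_mem g hx) f).symm
      _ ≤ ∑ c ∈ s.image g, b c :=
          sum_le_sum fun c _ => hfib c _ fun x hx => (mem_filter.1 hx).2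
      _ ≤ ∑' c, b c := hb.sum_le_tsum _ fun c _ => hb0 c
  exact ⟨summable_of_sum_le hf hsum, Real.tsum_le_of_sum_le hf hsum⟩

theorem Finset.Nat.card_antidiagonalTuple (k n : ℕ) :
    #(antidiagonalTuple k n) = multichoose k n := by
  rw [← Sym.card_sym_fin_eq_multichoose]
  exact card_eq_of_equiv_fintype <|
    (Equiv.subtypeEquivRight fun _ => mem_antidiagonalTuple).trans
      (Sym.equivNatSumOfFintype (Fin k) n).symm

theorem Nat.factorial_mul_multichoose_le (k n : ℕ) : k ! * multichoose k n ≤ (n + k) ^ k :=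
  calc k ! * multichoose k n ≤ k ! * (n + k).choose k := by
        rw [multichoose_eq, ← choose_symm_add, add_comm k n]
        exact Nat.mul_le_mul_left _ (choose_le_choose _ (by omega))
    _ = (n + 1).ascFactorial k := (ascFactorial_eq_factorial_mul_choose n k).symm
    _ ≤ (n + k) ^ k := ascFactorial_le_pow_add n k

theorem natCast_mul_card_antidiagonalTuple_mul_pow_le_one {k c : ℕ} {θ : ℝ} (hθ : 0 ≤ θ)
    (hkc : k ≤ c) (h : (2 * (c : ℝ)) ^ (k + 1) * θ ^ c ≤ k !) :
    c * #(antidiagonalTuple k c) * θ ^ c ≤ 1 := by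
  have hcard : c * (k ! * #(antidiagonalTuple k c)) ≤ (2 * c) ^ (k + 1) :=
    calc c * (k ! * #(antidiagonalTuple k c)) ≤ c * (c + k) ^ k := by
          rw [card_antidiagonalTuple]
          exact Nat.mul_le_mul_left _ (factorial_mul_multichoose_le k c)
      _ ≤ 2 * c * (2 * c) ^ k := by gcongr <;> omega
      _ = (2 * c) ^ (k + 1) := (pow_succ' _ _).symm
  have hcard' : (c : ℝ) * (k ! * #(antidiagonalTuple k c)) ≤ (2 * c) ^ (k + 1) := by
    exact_mod_cast hcard
  rw [← mul_le_mul_iff_of_pos_left (by positivity : (0 : ℝ) < k !), mul_one]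
  calc (k ! : ℝ) * (c * #(antidiagonalTuple k c) * θ ^ c)
      = c * (k ! * #(antidiagonalTuple k c)) * θ ^ c := by ring
    _ ≤ (2 * c) ^ (k + 1) * θ ^ c := by gcongr
    _ ≤ k ! := h

theorem sum_apply_mul_pow_le_of_subset_antidiagonalTuple {k c : ℕ} {θ : ℝ} (hθ : 0 ≤ θ)
    (hc : c * #(antidiagonalTuple k c) * θ ^ c ≤ 1) (i : Fin k)
    {t : Finset (Fin k → ℕ)} (ht : t ⊆ antidiagonalTuple k c) :
    ∑ Q ∈ t, (Q i : ℝ) * θ ^ (2 * ∑ j, Q j) ≤ θ ^ c := by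
  have hlevel {Q} (hQ : Q ∈ antidiagonalTuple k c) : ∑ j, Q j = c := mem_antidiagonalTuple.1 hQ
  calc ∑ Q ∈ t, (Q i : ℝ) * θ ^ (2 * ∑ j, Q j)
      ≤ ∑ Q ∈ antidiagonalTuple k c, (Q i : ℝ) * θ ^ (2 * ∑ j, Q j) :=
        sum_le_sum_of_subset_of_nonneg ht fun _ _ _ => by positivity
    _ ≤ ∑ Q ∈ antidiagonalTuple k c, (c : ℝ) * θ ^ (2 * c) := by
        refine sum_le_sum fun Q hQ => ?_
        rw [hlevel hQ]
        gcongr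
        exact_mod_cast (single_le_sum (fun j _ => Nat.zero_le (Q j)) (mem_univ i)).trans_eq
          (hlevel hQ)
    _ = (c * #(antidiagonalTuple k c) * θ ^ c) * θ ^ c := by
        rw [sum_const, nsmul_eq_mul, two_mul, pow_add]; ring
    _ ≤ θ ^ c := mul_le_of_le_one_left (by positivity) hc

theorem stmt_10_general (n m : ℕ) (hnm : n ≤ m) (θ : ℝ) (hθ0 : 0 < θ) (hθ1 : θ < 1)
    (hass : ∀ q : ℕ, m + 1 ≤ q → (2 * (q : ℝ)) ^ (n + 1) * θ ^ q ≤ n.factorial)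
    (i : Fin n) :
    Summable (fun Q : {Q : Fin n → ℕ // m + 1 ≤ ∑ j, Q j} =>
      (Q.1 i : ℝ) * θ ^ (2 * ∑ j, Q.1 j)) ∧
    ∑' Q : {Q : Fin n → ℕ // m + 1 ≤ ∑ j, Q j}, (Q.1 i : ℝ) * θ ^ (2 * ∑ j, Q.1 j) ≤
      θ ^ (m + 1) / (1 - θ) := by
  have hgeom : HasSum (fun q : ℕ => θ ^ (m + 1 + q)) (θ ^ (m + 1) / (1 - θ)) := by
    simpa only [pow_add, div_eq_mul_inv] using
      (hasSum_geometric_of_lt_one hθ0.le hθ1).mul_left (θ ^ (m + 1))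
  rw [← hgeom.tsum_eq]
  refine summable_and_tsum_le_of_sum_fiber_le (fun _ => by positivity)
    (fun Q => ∑ j, Q.1 j - (m + 1)) hgeom.summable fun q s hs => ?_
  have hst : s.map (Function.Embedding.subtype _) ⊆ antidiagonalTuple n (m + 1 + q) := by
    intro _ hQ
    obtain ⟨Q, hQs, rfl⟩ := mem_map.1 hQ
    have hlong := Q.2
    have hlevel := hs Q hQs
    exact mem_antidiagonalTuple.2 (by dsimp; omega)
  exact (sum_map s _ fun Q : Fin n → ℕ => (Q i : ℝ) * θ ^ (2 * ∑ j, Q j)).symm.trans_le <|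
    sum_apply_mul_pow_le_of_subset_antidiagonalTuple hθ0.le
      (natCast_mul_card_antidiagonalTuple_mul_pow_le_one hθ0.le (by omega) (hass _ (by omega)))
      i hst

/-- Cauchy-type combinatorial estimate: if `n ≤ m`, `0 < θ < 1` and
`(2q)^{n+1}·θ^q ≤ n!` for all `q ≥ m+1`, then for each coordinate `i` the sum
`Σ_{Q ∈ ℕⁿ, |Q| ≥ m+1} Q_i·θ^{2|Q|}` converges and is at most `θ^{m+1}/(1−θ)`. -/
theorem stmt_10 (n m : ℕ) (hn : 1 ≤ n) (hnm : n ≤ m) (θ : ℝ) (hθ0 : 0 < θ) (hθ1 : θ < 1)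
    (hass : ∀ q : ℕ, m + 1 ≤ q → (2 * (q : ℝ)) ^ (n + 1) * θ ^ q ≤ n.factorial)
    (i : Fin n) :
    Summable (fun Q : {Q : Fin n → ℕ // m + 1 ≤ ∑ j, Q j} =>
      (Q.1 i : ℝ) * θ ^ (2 * ∑ j, Q.1 j)) ∧
    ∑' Q : {Q : Fin n → ℕ // m + 1 ≤ ∑ j, Q j}, (Q.1 i : ℝ) * θ ^ (2 * ∑ j, Q.1 j) ≤
      θ ^ (m + 1) / (1 - θ) :=
  stmt_10_general n m hnm θ hθ0 hθ1 hass i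
end

section
/- Let n, l be positive integers, λ : Fin n → Fin l → ℂ with Λ := max_{i,j} |λ_{i,j}| > 0, let γ > 0, let ω : ℕ → ℝ be a sequence of positive numbers, and let k₀ ≤ ν be natural numbers. For each k with k₀ ≤ k ≤ ν let a_k : K → ℂˡ be a map on a set K ⊆ ℂᵖ, and let χ : K → ℂˡ satisfy: for all k with k₀ < k ≤ ν, all b ∈ K and all j, |χ_j(b) − a_{k,j}(b)| ≤ γ ω_{k+1} / (l Λ (2^{k+1}+1)). Define recursively K_{k₀} := K and, for k₀ < k ≤ ν, K_k := { b ∈ K_{k−1} : for every weight α ∈ W'_k, |Σ_{j=1}^l a_{k,j}(b) α_j| ≥ γ ω_{k+1} }, and define H_k(χ) := { b ∈ K : for every α ∈ W'_k, |Σ_{j=1}^l χ_j(b) α_j| ≥ 2 γ ω_{k+1} }. Then ⋂_{k=k₀+1}^{ν} H_k(χ) ⊆ K_ν. -/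
/-- The weight vector `α(Q,s) ∈ ℂˡ` with `α(Q,s)_j = Σ_i Q_i λ_{i,j} − λ_{s,j}`. -/
noncomputable def weightVec15 (n l : ℕ) (lam : Fin n → Fin l → ℂ) (Q : Fin n →₀ ℕ) (s : Fin n) :
    Fin l → ℂ :=
  fun j => (∑ i, (Q i : ℂ) * lam i j) - lam s j

/-- `W'_k`: the set of nonzero weight vectors `α(Q,s)` with `2^k + 1 ≤ |Q| ≤ 2^{k+1}`. -/
def weightSet15 (n l : ℕ) (lam : Fin n → Fin l → ℂ) (k : ℕ) : Set (Fin l → ℂ) :=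
  {α | α ≠ 0 ∧ ∃ Q : Fin n →₀ ℕ, ∃ s : Fin n, α = weightVec15 n l lam Q s ∧
    2 ^ k + 1 ≤ ∑ t, Q t ∧ ∑ t, Q t ≤ 2 ^ (k + 1)}

/-! Each condition defining `K_k` is implied by the corresponding condition `H_k(χ)`: replacing
`χ` by `a_k` changes `Σ_j χ_j(b) α_j` by at most `l · (γ ω_{k+1} / (l Λ (2^{k+1}+1))) · Λ (2^{k+1}+1)
= γ ω_{k+1}`, since every `α ∈ W'_k` has coordinates of size at most `Λ (2^{k+1}+1)`. An induction
on `k` then places every point of `⋂ H_k(χ)` in all the sets `K_k`. -/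

theorem mem_of_forall_mem_filter_step {α : Type*} {K : Set α} {Ks : ℕ → Set α}
    {P : ℕ → α → Prop} {k₀ ν : ℕ} (hk₀ν : k₀ ≤ ν) (hKs0 : Ks k₀ = K)
    (hKs : ∀ k, k₀ < k → k ≤ ν → Ks k = {b ∈ Ks (k - 1) | P k b})
    {b : α} (hbK : b ∈ K) (hP : ∀ k, k₀ < k → k ≤ ν → P k b) : b ∈ Ks ν := by
  suffices h : ∀ m, k₀ ≤ m → m ≤ ν → b ∈ Ks m from h ν hk₀ν le_rfl
  intro m hm
  induction m, hm using Nat.le_induction with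
  | base => exact fun _ => hKs0 ▸ hbK
  | succ m hm ih =>
    intro hmν
    have hlt : k₀ < m + 1 := Nat.lt_succ_of_le hm
    rw [hKs (m + 1) hlt hmν]
    exact ⟨ih (Nat.le_of_succ_le hmν), hP (m + 1) hlt hmν⟩

theorem norm_weightVec15_le {n l : ℕ} {lam : Fin n → Fin l → ℂ} {Λ : ℝ}
    (hlam : ∀ i j, ‖lam i j‖ ≤ Λ) (Q : Fin n →₀ ℕ) (s : Fin n) (j : Fin l) :
    ‖weightVec15 n l lam Q s j‖ ≤ Λ * ((∑ t, Q t : ℕ) + 1) := by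
  calc ‖(∑ i, (Q i : ℂ) * lam i j) - lam s j‖
      ≤ ∑ i, ‖(Q i : ℂ) * lam i j‖ + ‖lam s j‖ :=
        (norm_sub_le _ _).trans (add_le_add_left (norm_sum_le _ _) _)
    _ ≤ ∑ i, (Q i : ℝ) * Λ + Λ := by
        gcongr with i
        · rw [norm_mul, Complex.norm_natCast]
          exact mul_le_mul_of_nonneg_left (hlam i j) (Nat.cast_nonneg _)
        · exact hlam s j
    _ = Λ * ((∑ t, Q t : ℕ) + 1) := by push_cast; rw [← Finset.sum_mul]; ring

theorem norm_le_of_mem_weightSet15 {n l : ℕ} {lam : Fin n → Fin l → ℂ} {Λ : ℝ}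
    (hlam : ∀ i j, ‖lam i j‖ ≤ Λ) (hΛ : 0 ≤ Λ) {k : ℕ} {α : Fin l → ℂ}
    (hα : α ∈ weightSet15 n l lam k) (j : Fin l) :
    ‖α j‖ ≤ Λ * (2 ^ (k + 1) + 1) := by
  obtain ⟨-, Q, s, rfl, -, hQ⟩ := hα
  refine (norm_weightVec15_le hlam Q s j).trans ?_
  gcongr
  exact_mod_cast hQ

theorem norm_sum_mul_sub_sum_mul_le {ι R : Type*} [Fintype ι] [SeminormedRing R]
    {x y α : ι → R} {δ M : ℝ} (hxy : ∀ j, ‖x j - y j‖ ≤ δ) (hα : ∀ j, ‖α j‖ ≤ M) :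
    ‖∑ j, x j * α j - ∑ j, y j * α j‖ ≤ Fintype.card ι * (δ * M) := by
  rw [← Finset.sum_sub_distrib]
  calc ‖∑ j, (x j * α j - y j * α j)‖ ≤ ∑ j, ‖(x j - y j) * α j‖ := by
        simp only [sub_mul]; exact norm_sum_le _ _
    _ ≤ ∑ _j : ι, δ * M := Finset.sum_le_sum fun j _ => (norm_mul_le _ _).trans
        (mul_le_mul (hxy j) (hα j) (norm_nonneg _) ((norm_nonneg _).trans (hxy j)))
    _ = Fintype.card ι * (δ * M) := by
        rw [Finset.sum_const, Finset.card_univ, nsmul_eq_mul]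

theorem stmt_15_general (n l p : ℕ) (hl : 0 < l)
    (lam : Fin n → Fin l → ℂ) (Λ : ℝ)
    (hΛ : IsGreatest {x : ℝ | ∃ i j, x = ‖lam i j‖} Λ) (hΛpos : 0 < Λ)
    (γ : ℝ) (ω : ℕ → ℝ)
    (k₀ ν : ℕ) (hk₀ν : k₀ ≤ ν)
    (K : Set (Fin p → ℂ)) (a : ℕ → (Fin p → ℂ) → Fin l → ℂ)
    (χ : (Fin p → ℂ) → Fin l → ℂ)
    (hclose : ∀ k, k₀ < k → k ≤ ν → ∀ b ∈ K, ∀ j,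
      ‖χ b j - a k b j‖ ≤ γ * ω (k + 1) / ((l : ℝ) * Λ * (2 ^ (k + 1) + 1)))
    (Ks : ℕ → Set (Fin p → ℂ)) (hKs0 : Ks k₀ = K)
    (hKs : ∀ k, k₀ < k → k ≤ ν → Ks k = {b ∈ Ks (k - 1) |
      ∀ α ∈ weightSet15 n l lam k, γ * ω (k + 1) ≤ ‖∑ j, a k b j * α j‖}) :
    ∀ b ∈ K,
      (∀ k, k₀ < k → k ≤ ν →
        b ∈ {b ∈ K | ∀ α ∈ weightSet15 n l lam k,
          2 * γ * ω (k + 1) ≤ ‖∑ j, χ b j * α j‖}) →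
      b ∈ Ks ν := by
  intro b hbK hH
  have hlam : ∀ i j, ‖lam i j‖ ≤ Λ := fun i j => hΛ.2 ⟨i, j, rfl⟩
  refine mem_of_forall_mem_filter_step hk₀ν hKs0 hKs hbK fun k hk hkν α hα => ?_
  have hdiff : ‖∑ j, χ b j * α j - ∑ j, a k b j * α j‖ ≤ γ * ω (k + 1) := by
    refine (norm_sum_mul_sub_sum_mul_le (hclose k hk hkν b hbK)
      (norm_le_of_mem_weightSet15 hlam hΛpos.le hα)).trans_eq ?_
    rw [Fintype.card_fin]
    field_simp
  have := norm_sub_norm_le (∑ j, χ b j * α j) (∑ j, a k b j * α j)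
  linarith [(hH k hk hkν).2 α hα]

/-- If `χ` is uniformly close to each frequency map `a_k` on `K`, then every point of `K`
satisfying the strengthened diophantine conditions `H_k(χ)` for `k₀ < k ≤ ν` belongs to
the recursively defined set `K_ν`. -/
theorem stmt_15 (n l p : ℕ) (hn : 0 < n) (hl : 0 < l)
    (lam : Fin n → Fin l → ℂ) (Λ : ℝ)
    (hΛ : IsGreatest {x : ℝ | ∃ i j, x = ‖lam i j‖} Λ) (hΛpos : 0 < Λ)
    (γ : ℝ) (hγ : 0 < γ) (ω : ℕ → ℝ) (hω : ∀ k, 0 < ω k)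
    (k₀ ν : ℕ) (hk₀ν : k₀ ≤ ν)
    (K : Set (Fin p → ℂ)) (a : ℕ → (Fin p → ℂ) → Fin l → ℂ)
    (χ : (Fin p → ℂ) → Fin l → ℂ)
    (hclose : ∀ k, k₀ < k → k ≤ ν → ∀ b ∈ K, ∀ j,
      ‖χ b j - a k b j‖ ≤ γ * ω (k + 1) / ((l : ℝ) * Λ * (2 ^ (k + 1) + 1)))
    (Ks : ℕ → Set (Fin p → ℂ)) (hKs0 : Ks k₀ = K)
    (hKs : ∀ k, k₀ < k → k ≤ ν → Ks k = {b ∈ Ks (k - 1) |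
      ∀ α ∈ weightSet15 n l lam k, γ * ω (k + 1) ≤ ‖∑ j, a k b j * α j‖}) :
    ∀ b ∈ K,
      (∀ k, k₀ < k → k ≤ ν →
        b ∈ {b ∈ K | ∀ α ∈ weightSet15 n l lam k,
          2 * γ * ω (k + 1) ≤ ‖∑ j, χ b j * α j‖}) →
      b ∈ Ks ν :=
  stmt_15_general n l p hl lam Λ hΛ hΛpos γ ω k₀ ν hk₀ν K a χ hclose Ks hKs0 hKs
end

section
/- Let ω : ℕ → ℝ be a diophantine sequence, let γ, c₁ be positive reals, and let r > 0. Define γ_k := (γ² ω_{k+1}² / c₁)^{1/2^k} and the sequence R by R_0 = r and R_{k+1} = γ_k^5 · (2^k)^{−10/2^k} · R_k. Then the sequence (R_k) converges to a positive real number, and there exists an index k₁ such that R_k > R_{k₁}/2 for all k > k₁. -/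
open Filter Finset Real

/-- For a diophantine sequence `ω`, the sequence of radii defined by `R_0 = r` and
`R_{k+1} = γ_k^5·(2^k)^{−10/2^k}·R_k`, with `γ_k = (γ²ω_{k+1}²/c₁)^{1/2^k}`, converges to
a positive limit, and there is `k₁` such that `R_k > R_{k₁}/2` for all `k > k₁`. -/
theorem stmt_16 (ω : ℕ → ℝ) (hω : ∀ k, 1 ≤ k → 0 < ω k)
    (hω1 : ∀ k, 1 ≤ k → ω k ≤ 1) (hmono : ∀ k, 1 ≤ k → ω (k + 1) ≤ ω k)
    (hsum : Summable fun k : ℕ => -Real.log (ω (k + 1)) / 2 ^ (k + 1))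
    (γ c₁ r : ℝ) (hγ : 0 < γ) (hc₁ : 0 < c₁) (hr : 0 < r)
    (R : ℕ → ℝ) (hR0 : R 0 = r)
    (hRrec : ∀ k : ℕ, R (k + 1) =
      ((γ ^ 2 * ω (k + 1) ^ 2 / c₁) ^ ((1 : ℝ) / 2 ^ k)) ^ 5 *
        ((2 : ℝ) ^ k) ^ (-(10 : ℝ) / 2 ^ k) * R k) :
    (∃ L : ℝ, 0 < L ∧ Filter.Tendsto R Filter.atTop (nhds L)) ∧
      ∃ k₁ : ℕ, ∀ k, k₁ < k → R k₁ / 2 < R k := by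
  have hωpos : ∀ j : ℕ, 0 < ω (j + 1) := fun j => hω (j + 1) (Nat.le_add_left 1 j)
  set a : ℕ → ℝ := fun j => Real.log (((γ ^ 2 * ω (j + 1) ^ 2 / c₁) ^ ((1 : ℝ) / 2 ^ j)) ^ 5 *
        ((2 : ℝ) ^ j) ^ (-(10 : ℝ) / 2 ^ j)) with ha
  have hbase : ∀ j : ℕ, 0 < γ ^ 2 * ω (j + 1) ^ 2 / c₁ := by
    intro j; have := hωpos j; positivity
  have hfac : ∀ j : ℕ, 0 < ((γ ^ 2 * ω (j + 1) ^ 2 / c₁) ^ ((1 : ℝ) / 2 ^ j)) ^ 5 *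
        ((2 : ℝ) ^ j) ^ (-(10 : ℝ) / 2 ^ j) := by
    intro j
    exact mul_pos (pow_pos (Real.rpow_pos_of_pos (hbase j) _) 5)
      (Real.rpow_pos_of_pos (by positivity) _)
  have hRk : ∀ k, R k = r * Real.exp (∑ j ∈ Finset.range k, a j) := by
    intro k
    induction k with
    | zero => simp [hR0]
    | succ k ih =>
      rw [hRrec k, ih, Finset.sum_range_succ, Real.exp_add, ha, Real.exp_log (hfac k)]
      ring
  have haj : ∀ j : ℕ, a j = (5 * (2 * Real.log γ) - 5 * Real.log c₁) * (1/2 : ℝ) ^ j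
      + (-10 * Real.log 2) * (j * (1/2 : ℝ) ^ j)
      + 10 * Real.log (ω (j + 1)) * (1/2 : ℝ) ^ j := by
    intro j
    have h2j : (0:ℝ) < (2:ℝ) ^ j := by positivity
    rw [ha]
    simp only
    rw [Real.log_mul (pow_pos (Real.rpow_pos_of_pos (hbase j) _) 5).ne' (Real.rpow_pos_of_pos h2j _).ne', Real.log_pow,
      Real.log_rpow (hbase j), Real.log_rpow h2j,
      Real.log_div (mul_pos (pow_pos hγ 2) (pow_pos (hωpos j) 2)).ne' (ne_of_gt hc₁),
      Real.log_mul (pow_pos hγ 2).ne' (pow_pos (hωpos j) 2).ne',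
      Real.log_pow, Real.log_pow, Real.log_pow]
    have : ((1:ℝ)/2) ^ j = 1 / (2:ℝ) ^ j := by rw [div_pow, one_pow]
    rw [this]
    push_cast
    field_simp
    ring
  have hs1 : Summable (fun j : ℕ => (5 * (2 * Real.log γ) - 5 * Real.log c₁) * (1/2 : ℝ) ^ j) :=
    summable_geometric_two.mul_left _
  have hs2 : Summable (fun j : ℕ => (-10 * Real.log 2) * (j * (1/2 : ℝ) ^ j)) := by
    refine Summable.mul_left _ ?_
    have h := summable_pow_mul_geometric_of_norm_lt_one 1 (by norm_num : ‖(1/2 : ℝ)‖ < 1)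
    exact h.congr (by intro n; simp)
  have hs3 : Summable (fun j : ℕ => 10 * Real.log (ω (j + 1)) * (1/2 : ℝ) ^ j) := by
    have h := (hsum.neg).mul_left 20
    refine h.congr ?_
    intro j
    have h2j : (0:ℝ) < (2:ℝ) ^ (j + 1) := by positivity
    have : ((1:ℝ)/2) ^ j = 1 / (2:ℝ) ^ j := by rw [div_pow, one_pow]
    rw [this]
    rw [pow_succ]
    field_simp
    ring
  have hsa : Summable a := by
    refine ((hs1.add hs2).add hs3).congr ?_
    intro j; rw [haj j]
  obtain ⟨S, hS⟩ := hsa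
  have htend : Tendsto (fun k => ∑ j ∈ Finset.range k, a j) atTop (nhds S) :=
    hS.tendsto_sum_nat
  set L : ℝ := r * Real.exp S with hL
  have hLpos : 0 < L := mul_pos hr (Real.exp_pos S)
  have hRtend : Tendsto R atTop (nhds L) := by
    have : Tendsto (fun k => r * Real.exp (∑ j ∈ Finset.range k, a j)) atTop (nhds L) :=
      ((Real.continuous_exp.tendsto S).comp htend).const_mul r
    exact this.congr (fun k => (hRk k).symm)
  refine ⟨⟨L, hLpos, hRtend⟩, ?_⟩
  obtain ⟨N, hN⟩ := Metric.tendsto_atTop.mp hRtend (L / 4) (by positivity)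
  refine ⟨N, fun k hk => ?_⟩
  have h1 := hN N le_rfl
  have h2 := hN k hk.le
  rw [Real.dist_eq, abs_lt] at h1 h2
  linarith [h1.2, h2.1]
end
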